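/- arXiv:1201.4307 — 3 statements merged into one kernel-verified Lean document; each statement's English description precedes it below -/
import Mathlib

section
/- Let M be a quantitative monoid with unit 1, and let Time(c) ∈ ℕ ∪ {⊥} assign to each command its number of β-steps to normal form (undefined if non-normalizing), satisfying: if c →_β c' then Time(c) is defined iff Time(c') is and Time(c) = Time(c') + 1; if c →_μ c' then Time(c) = Time(c'). Then ⫫_Time = {(c, p) : Time(c) is defined and Time(c) ≤ ‖p‖}, with p_β = 1, is a saturated quantitative pole. -/
/-- The time pole `⫫_Time = {(c,p) : Time c defined ∧ Time c ≤ ‖p‖}` with `pβ = 1`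
is a saturated quantitative pole. -/
theorem time_pole_saturated {C M : Type*} [AddCommMonoid M] [Preorder M]
    (norm : M → ℕ)
    (hanti : ∀ p q : M, norm p + norm q ≤ norm (p + q))
    (hmono : ∀ p q : M, p ≤ q → norm p ≤ norm q)
    (one : M) (hone : 1 ≤ norm one)
    (rbeta rmu : C → C → Prop)
    (Time : C → Option ℕ)
    (hTb : ∀ c c' : C, rbeta c c' → Time c = Option.map (· + 1) (Time c'))
    (hTm : ∀ c c' : C, rmu c c' → Time c = Time c') :
    (∀ (c c' : C) (p : M), rbeta c c' →
        (∃ n, Time c' = some n ∧ n ≤ norm p) →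
        (∃ n, Time c = some n ∧ n ≤ norm (p + one))) ∧
    (∀ (c c' : C) (p : M), rmu c c' →
        ((∃ n, Time c' = some n ∧ n ≤ norm p) ↔ (∃ n, Time c = some n ∧ n ≤ norm p))) ∧
    (∀ (c : C) (p p' : M), p ≤ p' →
        (∃ n, Time c = some n ∧ n ≤ norm p) → (∃ n, Time c = some n ∧ n ≤ norm p')) := by
  refine ⟨?_, ?_, ?_⟩
  · rintro c c' p hb ⟨n, hn, hle⟩
    refine ⟨n + 1, by rw [hTb c c' hb, hn]; rfl, ?_⟩
    calc n + 1 ≤ norm p + norm one := add_le_add hle hone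
      _ ≤ norm (p + one) := hanti p one
  · rintro c c' p hm
    rw [hTm c c' hm]
  · rintro c p p' hpp ⟨n, hn, hle⟩
    exact ⟨n, hn, hle.trans (hmono p p' hpp)⟩
end

section
/- The soft monoid M_s, whose elements are pairs (n, f) with n ∈ ℕ and f a polynomial with natural-number coefficients, with (n,f) + (m,g) = (max(n,m), f+g), zero (0, 0), unit (0, 1), order (n,f) ≤ (m,g) iff n ≤ m and f(x) ≤ g(x) for all x ≥ m and (g−f) is monotone on [m, ∞), and measure ‖(n,f)‖ = f(n), is a quantitative monoid with unit. -/
/-- Carrier of the soft monoid: pairs of a natural number and a polynomial over `ℕ`. -/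
def SoftM : Type := ℕ × Polynomial ℕ

noncomputable def sadd (p q : SoftM) : SoftM := (max p.1 q.1, p.2 + q.2)

noncomputable def szero : SoftM := (0, 0)

noncomputable def sone : SoftM := (0, 1)

def sle (p q : SoftM) : Prop :=
  p.1 ≤ q.1 ∧ (∀ x, q.1 ≤ x → p.2.eval x ≤ q.2.eval x) ∧
    (∀ x y, q.1 ≤ x → x ≤ y → q.2.eval x - p.2.eval x ≤ q.2.eval y - p.2.eval y)

def snorm (p : SoftM) : ℕ := p.2.eval p.1

theorem Polynomial.eval_mono_nat (f : Polynomial ℕ) : Monotone fun x : ℕ => f.eval x := by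
  intro x y hxy
  simp only [Polynomial.eval_eq_sum, Polynomial.sum_def]
  gcongr

namespace SoftM

theorem sadd_assoc (p q r : SoftM) : sadd p (sadd q r) = sadd (sadd p q) r :=
  Prod.ext (max_assoc _ _ _).symm (add_assoc _ _ _).symm

theorem sadd_comm (p q : SoftM) : sadd p q = sadd q p :=
  Prod.ext (max_comm _ _) (add_comm _ _)

theorem szero_sadd (p : SoftM) : sadd szero p = p :=
  Prod.ext (max_eq_right (Nat.zero_le _)) (zero_add _)

theorem sle_refl (p : SoftM) : sle p p :=
  ⟨le_rfl, fun _ _ => le_rfl, fun _ _ _ _ => by simp⟩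

theorem sle_trans {p q r : SoftM} (hpq : sle p q) (hqr : sle q r) : sle p r := by
  obtain ⟨hpq₁, hpq₂, hpq₃⟩ := hpq
  obtain ⟨hqr₁, hqr₂, hqr₃⟩ := hqr
  refine ⟨hpq₁.trans hqr₁, fun x hx => (hpq₂ x (hqr₁.trans hx)).trans (hqr₂ x hx),
    fun x y hx hxy => ?_⟩
  -- On `[r.1, ∞)` no subtraction truncates, so `r - p = (r - q) + (q - p)` is a sum of
  -- monotone functions.
  have := hpq₂ x (hqr₁.trans hx)
  have := hpq₂ y (hqr₁.trans (hx.trans hxy))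
  have := hqr₂ x hx
  have := hqr₂ y (hx.trans hxy)
  have := hpq₃ x y (hqr₁.trans hx) hxy
  have := hqr₃ x y hx hxy
  omega

theorem snorm_add_snorm_le (p q : SoftM) : snorm p + snorm q ≤ snorm (sadd p q) := by
  simp only [snorm, sadd, Polynomial.eval_add]
  gcongr
  · exact p.2.eval_mono_nat (le_max_left _ _)
  · exact q.2.eval_mono_nat (le_max_right _ _)

theorem snorm_mono {p q : SoftM} (h : sle p q) : snorm p ≤ snorm q :=
  (p.2.eval_mono_nat h.1).trans (h.2.1 q.1 le_rfl)

theorem one_le_snorm_sone : 1 ≤ snorm sone := by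
  simp [snorm, sone]

end SoftM

/-- The soft monoid is a quantitative monoid with unit. -/
theorem soft_monoid_is_quant_monoid_with_unit :
    (∀ p q r : SoftM, sadd p (sadd q r) = sadd (sadd p q) r) ∧
    (∀ p q : SoftM, sadd p q = sadd q p) ∧
    (∀ p : SoftM, sadd szero p = p) ∧
    (∀ p : SoftM, sle p p) ∧
    (∀ p q r : SoftM, sle p q → sle q r → sle p r) ∧
    (∀ p q : SoftM, snorm p + snorm q ≤ snorm (sadd p q)) ∧
    (∀ p q : SoftM, sle p q → snorm p ≤ snorm q) ∧
    1 ≤ snorm sone :=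
  ⟨SoftM.sadd_assoc, SoftM.sadd_comm, SoftM.szero_sadd, SoftM.sle_refl,
    fun _ _ _ => SoftM.sle_trans, SoftM.snorm_add_snorm_le, fun _ _ => SoftM.snorm_mono,
    SoftM.one_le_snorm_sone⟩
end

section
/- In the soft monoid, the operation !(n, f) = (n, f⁺) where f⁺(X) = (X+1)·f(X), together with the family r_k = (k, 0), is a soft exponential: (i) !p + !q ≤ !(p + q) for all p, q, and (ii) k·p ≤ !p + r_k for all p and all k ∈ ℕ. -/
/-- `!(n, f) = (n, (X+1)·f)`. -/
noncomputable def bang (p : SoftM) : SoftM := (p.1, (Polynomial.X + 1) * p.2)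

/-- `r_k = (k, 0)`. -/
noncomputable def rk (k : ℕ) : SoftM := (k, 0)

/-- `k·p = p + ⋯ + p` (`k` times). -/
noncomputable def ksum : ℕ → SoftM → SoftM
  | 0, _ => szero
  | k + 1, p => sadd p (ksum k p)

lemma eval_mono (f : Polynomial ℕ) {x y : ℕ} (h : x ≤ y) : f.eval x ≤ f.eval y := by
  rw [Polynomial.eval_eq_sum_range, Polynomial.eval_eq_sum_range]
  exact Finset.sum_le_sum fun i _ =>
    Nat.mul_le_mul le_rfl (Nat.pow_le_pow_left h i)

lemma ksum_fst (k : ℕ) (p : SoftM) : (ksum k p).1 ≤ p.1 := by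
  induction k with
  | zero => exact Nat.zero_le _
  | succ k ih => simpa [ksum, sadd] using ih

lemma ksum_eval (k : ℕ) (p : SoftM) (x : ℕ) :
    (ksum k p).2.eval x = k * p.2.eval x := by
  induction k with
  | zero => simp [ksum, szero]
  | succ k ih => simp [ksum, sadd, ih]; ring

/-- `(!, (r_k))` is a soft exponential on the soft monoid. -/
theorem soft_exponential :
    (∀ p q : SoftM, sle (sadd (bang p) (bang q)) (bang (sadd p q))) ∧
    (∀ (k : ℕ) (p : SoftM), sle (ksum k p) (sadd (bang p) (rk k))) := by
  constructor
  · intro p q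
    refine ⟨le_rfl, fun x _ => ?_, fun x y _ _ => ?_⟩ <;>
      simp [sadd, bang, mul_add]
  · intro k p
    refine ⟨le_trans (ksum_fst k p) (le_max_left _ _), fun x hx => ?_, fun x y hx hxy => ?_⟩
    · have hk : k ≤ x := le_trans (le_max_right _ _) hx
      simp only [sadd, bang, rk, Polynomial.eval_add, Polynomial.eval_mul,
        Polynomial.eval_X, Polynomial.eval_one, Polynomial.eval_zero, ksum_eval]
      calc k * p.2.eval x ≤ (x + 1) * p.2.eval x :=
            Nat.mul_le_mul_right _ (by omega)
        _ ≤ _ := by omega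
    · have hk : k ≤ x := le_trans (le_max_right _ _) hx
      have hfx : p.2.eval x ≤ p.2.eval y := eval_mono _ hxy
      simp only [sadd, bang, rk, Polynomial.eval_add, Polynomial.eval_mul,
        Polynomial.eval_X, Polynomial.eval_one, Polynomial.eval_zero, ksum_eval]
      have e : ∀ z : ℕ, k ≤ z → (z + 1) * p.2.eval z + 0 - k * p.2.eval z
          = (z + 1 - k) * p.2.eval z := by
        intro z hz
        rw [Nat.add_zero, ← Nat.sub_mul]
      rw [e x hk, e y (le_trans hk hxy)]
      exact Nat.mul_le_mul (by omega) hfx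
end
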